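/- arXiv:1502.04102 — 2 statements merged into one kernel-verified Lean document; each statement's English description precedes it below -/
import Mathlib

section
/- The map sending t to s^{-1}(s-1)^2 and u to s - s^{-1} defines a C-algebra isomorphism from R = C[t, t^{-1}, u | u^2 = t^2 + 4t] to S = C[s, s^{-1}, (s-1)^{-1}]. -/
open Polynomial LaurentPolynomial

/-- The three-point ring `R = ℂ[t,t⁻¹,u | u² = t² + 4t]`. -/
noncomputable abbrev ThreePointRing : Type :=
  AdjoinRoot (Polynomial.X ^ 2 -
    Polynomial.C (LaurentPolynomial.T 1 ^ 2 + 4 * LaurentPolynomial.T 1) :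
      Polynomial (LaurentPolynomial ℂ))

/-- The element `t` of the three-point ring. -/
noncomputable def tR : ThreePointRing := AdjoinRoot.of _ (LaurentPolynomial.T 1)

/-- The element `u` of the three-point ring. -/
noncomputable def uR : ThreePointRing := AdjoinRoot.root _

/-- The ring `S = ℂ[s, s⁻¹, (s-1)⁻¹]`, i.e. the localization of `ℂ[s]` at the
multiplicative set generated by `s` and `s - 1`. -/
abbrev SRing : Type :=
  Localization (Submonoid.closure {(Polynomial.X : Polynomial ℂ), Polynomial.X - 1})

noncomputable def sS : SRing := algebraMap (Polynomial ℂ) SRing Polynomial.X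

/-!
`SRing` and `ℂ[T, T⁻¹]` are localizations of `ℂ[X]`, and `ThreePointRing` is a quotient of a
polynomial ring over `ℂ[T, T⁻¹]`, so `ℂ`-algebra maps out of these rings are determined by the
images of the generators: out of `ThreePointRing` by a unit `t` and an element `u` with
`u² = t² + 4t`, out of `SRing` by an element `s` such that `s` and `s - 1` are units.
For `S → R` take `s ↦ (t + 2 + u)/2`: on the conic `(t + 2 + u)(t + 2 - u) = 4` and
`(t + u)(u - t) = 4t`, so both `s` and `s - 1 = (t + u)/2` become units. For `R → S` take
`t ↦ s⁻¹(s - 1)² = s + s⁻¹ - 2` and `u ↦ s - s⁻¹`, which satisfy the relation because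
`(s + s⁻¹)² - (s - s⁻¹)² = 4`. The two maps are mutually inverse on generators.
-/

section CommRing

variable {A : Type*} [CommRing A]

theorem sub_sq_eq_of_mul_eq_one {x y : A} (h : x * y = 1) :
    (x - y) ^ 2 = (x + y - 2) ^ 2 + 4 * (x + y - 2) := by
  linear_combination (-4) * h

theorem add_sub_two_eq_of_mul_eq_one {x y : A} (h : x * y = 1) :
    x + y - 2 = y * (x - 1) ^ 2 := by
  linear_combination (2 - x) * h

variable [Invertible (2 : A)] {t u : A}

theorem mul_eq_one_of_sq_eq_sq_add_four_mul (h : u ^ 2 = t ^ 2 + 4 * t) :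
    ⅟2 * (t + 2 + u) * (⅟2 * (t + 2 - u)) = 1 := by
  linear_combination (-(⅟2 : A) ^ 2) * h + (2 * ⅟2 + 1) * mul_invOf_self (2 : A)

theorem sub_one_mul_eq_one_of_sq_eq_sq_add_four_mul {t' : A} (h : u ^ 2 = t ^ 2 + 4 * t)
    (ht : t * t' = 1) : (⅟2 * (t + 2 + u) - 1) * (⅟2 * (u - t) * t') = 1 := by
  linear_combination ((⅟2 : A) ^ 2 * t') * h + ht
    + ((2 * ⅟2 + 1) * t * t' - ⅟2 * t' * (t - u)) * mul_invOf_self (2 : A)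

end CommRing

instance LaurentPolynomial.isScalarTower_polynomial (R : Type*) [CommSemiring R] :
    IsScalarTower R R[X] R[T;T⁻¹] :=
  IsScalarTower.of_algebraMap_eq fun r => by
    rw [LaurentPolynomial.algebraMap_apply, Polynomial.algebraMap_apply, algebraMap_eq_toLaurent]
    simp

namespace IsLocalization

variable {R A L : Type*} [CommSemiring R] [CommSemiring A] [Algebra R A] [CommSemiring L]
  [Algebra R L] [Algebra R[X] L] [IsScalarTower R R[X] L]

noncomputable def liftAeval (M : Submonoid R[X]) [IsLocalization M L] (x : A)
    (hx : ∀ p ∈ M, IsUnit (aeval x p)) : L →ₐ[R] A :=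
  liftAlgHom (M := M) (f := aeval x) fun p => hx p p.2

@[simp]
theorem liftAeval_algebraMap (M : Submonoid R[X]) [IsLocalization M L] (x : A)
    (hx : ∀ p ∈ M, IsUnit (aeval x p)) (p : R[X]) :
    liftAeval M x hx (algebraMap R[X] L p) = aeval x p := by
  simp [liftAeval]

theorem algHom_ext_X (M : Submonoid R[X]) [IsLocalization M L] {f g : L →ₐ[R] A}
    (h : f (algebraMap R[X] L X) = g (algebraMap R[X] L X)) : f = g :=
  algHom_ext M (Polynomial.algHom_ext h)

end IsLocalization

namespace LaurentPolynomial

variable {R A : Type*} [CommSemiring R] [CommSemiring A] [Algebra R A]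

theorem T_one_eq_algebraMap_X : (T 1 : R[T;T⁻¹]) = algebraMap R[X] R[T;T⁻¹] X := by
  rw [algebraMap_eq_toLaurent, Polynomial.toLaurent_X]

noncomputable def liftOfIsUnit (w : A) (hw : IsUnit w) : R[T;T⁻¹] →ₐ[R] A :=
  IsLocalization.liftAeval (Submonoid.powers X) w (by rintro _ ⟨n, rfl⟩; simpa using hw.pow n)

@[simp]
theorem liftOfIsUnit_T_one (w : A) (hw : IsUnit w) : liftOfIsUnit (R := R) w hw (T 1) = w := by
  rw [liftOfIsUnit, T_one_eq_algebraMap_X, IsLocalization.liftAeval_algebraMap, aeval_X]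

theorem algHom_ext_T_one {f g : R[T;T⁻¹] →ₐ[R] A} (h : f (T 1) = g (T 1)) : f = g :=
  IsLocalization.algHom_ext_X (Submonoid.powers X) (by rwa [← T_one_eq_algebraMap_X])

end LaurentPolynomial

namespace ThreePointRing

variable {A : Type*} [CommRing A] [Algebra ℂ A]

noncomputable def lift (t u : A) (ht : IsUnit t) (h : u ^ 2 = t ^ 2 + 4 * t) :
    ThreePointRing →ₐ[ℂ] A :=
  AdjoinRoot.liftAlgHom _ (liftOfIsUnit t ht) u (by
    rw [eval₂_sub, eval₂_X_pow, Polynomial.eval₂_C, map_add, map_pow, map_mul, map_ofNat,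
      AlgHom.coe_toRingHom, liftOfIsUnit_T_one, h, sub_self])

@[simp]
theorem lift_tR (t u : A) (ht : IsUnit t) (h : u ^ 2 = t ^ 2 + 4 * t) : lift t u ht h tR = t := by
  rw [lift, tR, AdjoinRoot.liftAlgHom_of, liftOfIsUnit_T_one]

@[simp]
theorem lift_uR (t u : A) (ht : IsUnit t) (h : u ^ 2 = t ^ 2 + 4 * t) : lift t u ht h uR = u :=
  AdjoinRoot.liftAlgHom_root _ _ _ _

theorem algHom_ext {f g : ThreePointRing →ₐ[ℂ] A} (ht : f tR = g tR) (hu : f uR = g uR) : f = g :=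
  AdjoinRoot.algHom_ext' (algHom_ext_T_one ht) hu

theorem isUnit_tR : IsUnit tR :=
  (isUnit_T 1).map (AdjoinRoot.of _)

theorem uR_sq : uR ^ 2 = tR ^ 2 + 4 * tR := by
  set f : ℂ[T;T⁻¹][X] := X ^ 2 - Polynomial.C (T 1 ^ 2 + 4 * T 1) with hf
  have h : AdjoinRoot.mk f (X ^ 2 - Polynomial.C (T 1 ^ 2 + 4 * T 1)) = 0 := by
    rw [← hf]; exact AdjoinRoot.mk_self
  rw [map_sub, map_pow, AdjoinRoot.mk_X, AdjoinRoot.mk_C, map_add, map_pow, map_mul, map_ofNat,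
    sub_eq_zero] at h
  exact h

end ThreePointRing

namespace SRing

variable {A : Type*} [CommRing A] [Algebra ℂ A]

noncomputable def lift (s : A) (hs : IsUnit s) (hs1 : IsUnit (s - 1)) : SRing →ₐ[ℂ] A :=
  IsLocalization.liftAeval (Submonoid.closure {X, X - 1}) s fun p hp => by
    induction hp using Submonoid.closure_induction with
    | mem q hq =>
      rcases hq with rfl | rfl
      · simpa using hs
      · simpa using hs1
    | one => simp
    | mul p q _ _ hp hq => rw [map_mul]; exact hp.mul hq

@[simp]
theorem lift_sS (s : A) (hs : IsUnit s) (hs1 : IsUnit (s - 1)) : lift s hs hs1 sS = s := by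
  rw [lift, sS, IsLocalization.liftAeval_algebraMap, aeval_X]

theorem algHom_ext {f g : SRing →ₐ[ℂ] A} (h : f sS = g sS) : f = g :=
  IsLocalization.algHom_ext_X (Submonoid.closure {X, X - 1}) h

theorem isUnit_sS : IsUnit sS :=
  IsLocalization.map_units SRing (⟨X, Submonoid.subset_closure (by simp)⟩ :
    Submonoid.closure {(X : ℂ[X]), X - 1})

theorem isUnit_sS_sub_one : IsUnit (sS - 1) := by
  rw [sS, ← map_one (algebraMap ℂ[X] SRing), ← map_sub]
  exact IsLocalization.map_units SRing (⟨X - 1, Submonoid.subset_closure (by simp)⟩ :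
    Submonoid.closure {(X : ℂ[X]), X - 1})

end SRing

noncomputable instance : Invertible (2 : ThreePointRing) :=
  (Invertible.map (algebraMap ℂ ThreePointRing) 2).copy 2 (map_ofNat _ 2).symm

noncomputable def sInv : SRing := ↑SRing.isUnit_sS.unit⁻¹

theorem sS_mul_sInv : sS * sInv = 1 := SRing.isUnit_sS.mul_val_inv

noncomputable def toSRing : ThreePointRing →ₐ[ℂ] SRing :=
  ThreePointRing.lift (sS + sInv - 2) (sS - sInv)
    (by
      rw [add_sub_two_eq_of_mul_eq_one sS_mul_sInv]
      exact SRing.isUnit_sS.unit⁻¹.isUnit.mul (SRing.isUnit_sS_sub_one.pow 2))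
    (sub_sq_eq_of_mul_eq_one sS_mul_sInv)

theorem toSRing_tR : toSRing tR = sS + sInv - 2 := ThreePointRing.lift_tR _ _ _ _

theorem toSRing_uR : toSRing uR = sS - sInv := ThreePointRing.lift_uR _ _ _ _

noncomputable def ofSRing : SRing →ₐ[ℂ] ThreePointRing :=
  SRing.lift (⅟2 * (tR + 2 + uR))
    (.of_mul_eq_one _ (mul_eq_one_of_sq_eq_sq_add_four_mul ThreePointRing.uR_sq))
    (.of_mul_eq_one _ (sub_one_mul_eq_one_of_sq_eq_sq_add_four_mul ThreePointRing.uR_sq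
      ThreePointRing.isUnit_tR.mul_val_inv))

theorem ofSRing_sS : ofSRing sS = ⅟2 * (tR + 2 + uR) := SRing.lift_sS _ _ _

theorem ofSRing_sInv : ofSRing sInv = ⅟2 * (tR + 2 - uR) :=
  left_inv_eq_right_inv (by rw [mul_comm, ← map_mul, sS_mul_sInv, map_one])
    (ofSRing_sS ▸ mul_eq_one_of_sq_eq_sq_add_four_mul ThreePointRing.uR_sq)

theorem ofSRing_comp_toSRing : ofSRing.comp toSRing = AlgHom.id ℂ ThreePointRing := by
  refine ThreePointRing.algHom_ext ?_ ?_
  · simp only [AlgHom.comp_apply, AlgHom.id_apply, toSRing_tR, map_sub, map_add, map_ofNat,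
      ofSRing_sS, ofSRing_sInv]
    linear_combination (tR + 2) * mul_invOf_self (2 : ThreePointRing)
  · simp only [AlgHom.comp_apply, AlgHom.id_apply, toSRing_uR, map_sub, ofSRing_sS, ofSRing_sInv]
    linear_combination uR * mul_invOf_self (2 : ThreePointRing)

theorem toSRing_comp_ofSRing : toSRing.comp ofSRing = AlgHom.id ℂ SRing := by
  refine SRing.algHom_ext ?_
  have h2 : toSRing (⅟2) * 2 = 1 := by
    rw [← map_ofNat toSRing 2, ← map_mul, invOf_mul_self, map_one]
  simp only [AlgHom.comp_apply, AlgHom.id_apply, ofSRing_sS, map_mul, map_add, map_ofNat,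
    toSRing_tR, toSRing_uR]
  linear_combination sS * h2

/-- the map `t ↦ s⁻¹(s-1)²`, `u ↦ s - s⁻¹` defines a `ℂ`-algebra
isomorphism `R ≃ S`.  (Since `s` is invertible in `S`, the conditions
`e t = s⁻¹ (s-1)²` and `e u = s - s⁻¹` are expressed by multiplying through by `s`.) -/
theorem three_point_ring_iso :
    ∃ e : ThreePointRing ≃ₐ[ℂ] SRing,
      sS * e tR = (sS - 1) ^ 2 ∧ sS * e uR = sS ^ 2 - 1 := by
  refine ⟨AlgEquiv.ofAlgHom toSRing ofSRing toSRing_comp_ofSRing ofSRing_comp_toSRing, ?_, ?_⟩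
  · simp only [AlgEquiv.ofAlgHom_apply, toSRing_tR]
    linear_combination sS_mul_sInv
  · simp only [AlgEquiv.ofAlgHom_apply, toSRing_uR]
    linear_combination (-1) * sS_mul_sInv
end

section
/- Let R = C[t, t^{-1}, u | u^m = P(t)] where P(t) and P'(t) are relatively prime polynomials and m \geq 2. Then the module of C-linear derivations of R is a free R-module of rank 1 generated by P'(t)\partial_u + m u^{m-1}\partial_t, i.e., Der_C(R) = R\,(P'(t)\partial/\partial u + m u^{m-1}\partial/\partial t). -/
open Polynomial LaurentPolynomial

/-- The superelliptic ring `R = ℂ[t,t⁻¹,u | uᵐ = P(t)]`. -/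
noncomputable abbrev SuperRing (P : Polynomial ℂ) (m : ℕ) : Type :=
  AdjoinRoot (Polynomial.X ^ m - Polynomial.C (Polynomial.toLaurent P) :
    Polynomial (LaurentPolynomial ℂ))

namespace SupAux

variable (P : Polynomial ℂ) (m : ℕ)

noncomputable abbrev fP : Polynomial (LaurentPolynomial ℂ) :=
  Polynomial.X ^ m - Polynomial.C (Polynomial.toLaurent P)

noncomputable def O : LaurentPolynomial ℂ →+* SuperRing P m := AdjoinRoot.of _
noncomputable def uu : SuperRing P m := AdjoinRoot.root _
noncomputable def ww : SuperRing P m := (m : ℂ) • uu P m ^ (m - 1)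
noncomputable def vP : SuperRing P m := O P m (toLaurent (derivative P))
noncomputable def mkh : Polynomial (LaurentPolynomial ℂ) →+* SuperRing P m := AdjoinRoot.mk _

lemma mkh_C (a : LaurentPolynomial ℂ) : mkh P m (Polynomial.C a) = O P m a := rfl
lemma mkh_X : mkh P m Polynomial.X = uu P m := rfl
lemma O_C (c : ℂ) : O P m (LaurentPolynomial.C c) = algebraMap ℂ (SuperRing P m) c := rfl
lemma O_T_mul (a b : ℤ) : O P m (T a) * O P m (T b) = O P m (T (a + b)) := by
  rw [← map_mul, ← T_add]

/-- `dA p = (dp/dt) · m u^(m-1)` as an element of the superelliptic ring. -/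
noncomputable def dA : LaurentPolynomial ℂ →ₗ[ℂ] SuperRing P m where
  toFun p := Finsupp.sum (AddMonoidAlgebra.coeff p) fun n c => c • (n • (O P m (T (n - 1)) * ww P m))
  map_add' p q := by
    rw [AddMonoidAlgebra.coeff_add]; exact Finsupp.sum_add_index (by simp) (by intros; rw [add_smul])
  map_smul' c p := by
    rw [RingHom.id_apply, Finsupp.smul_sum]
    show Finsupp.sum (c • AddMonoidAlgebra.coeff p) (fun n c => c • (n • (O P m (T (n - 1)) * ww P m))) = _
    rw [Finsupp.sum_smul_index' (h := fun n c => c • (n • (O P m (T (n - 1)) * ww P m)))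
      (fun i => zero_smul ℂ _)]
    exact Finsupp.sum_congr fun n _ => by rw [smul_eq_mul, mul_smul]

lemma dA_single (n : ℤ) (c : ℂ) :
    dA P m (AddMonoidAlgebra.single n c) = c • (n • (O P m (T (n - 1)) * ww P m)) := by
  show Finsupp.sum (Finsupp.single n c) (fun n c => c • (n • (O P m (T (n - 1)) * ww P m))) = _
  rw [Finsupp.sum_single_index (h := fun n c => c • (n • (O P m (T (n - 1)) * ww P m)))
    (zero_smul ℂ _)]

lemma dA_C (r : ℂ) : dA P m (LaurentPolynomial.C r) = 0 := by
  have h := dA_single P m 0 r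
  rw [single_eq_C] at h
  simpa using h

lemma dA_one : dA P m 1 = 0 := by
  rw [← map_one (LaurentPolynomial.C (R := ℂ)), dA_C]

lemma dA_mul (p q : LaurentPolynomial ℂ) :
    dA P m (p * q) = O P m p * dA P m q + O P m q * dA P m p := by
  induction p using AddMonoidAlgebra.induction_linear with
  | zero => simp
  | add f g hf hg => rw [add_mul, map_add, map_add, map_add, hf, hg]; ring
  | single n c =>
    induction q using AddMonoidAlgebra.induction_linear with
    | zero => simp
    | add f g hf hg => rw [mul_add, map_add, map_add, map_add, hf, hg]; ring
    | single k d =>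
      rw [AddMonoidAlgebra.single_mul_single, dA_single, dA_single, dA_single]
      have h1 : O P m (T n) * O P m (T (k - 1)) = O P m (T (n + k - 1)) := by
        rw [O_T_mul]; congr 1; ring
      have h2 : O P m (T k) * O P m (T (n - 1)) = O P m (T (n + k - 1)) := by
        rw [O_T_mul]; congr 1; ring
      simp only [single_eq_C_mul_T, map_mul, O_C, Algebra.smul_def, zsmul_eq_mul, map_mul,
        Int.cast_add, eq_intCast]
      linear_combination -(algebraMap ℂ (SuperRing P m) c * algebraMap ℂ (SuperRing P m) d *
          (k : SuperRing P m) * ww P m) * h1 -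
        (algebraMap ℂ (SuperRing P m) c * algebraMap ℂ (SuperRing P m) d *
          (n : SuperRing P m) * ww P m) * h2

lemma dA_toLaurent (Q : Polynomial ℂ) :
    dA P m (toLaurent Q) = O P m (toLaurent (derivative Q)) * ww P m := by
  induction Q using Polynomial.induction_on' with
  | add f g hf hg => rw [derivative_add, map_add, map_add, map_add, map_add, hf, hg]; ring
  | monomial n r =>
    rw [derivative_monomial]
    rcases n with _ | n
    · simp [dA_C]
    · rw [toLaurent_C_mul_T, toLaurent_C_mul_T, ← single_eq_C_mul_T, ← single_eq_C_mul_T,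
        dA_single, single_eq_C_mul_T, map_mul, O_C]
      have : ((n + 1 : ℕ) : ℤ) - 1 = ((n : ℕ) : ℤ) := by push_cast; ring
      rw [this]
      simp only [Algebra.smul_def, zsmul_eq_mul, map_mul]
      push_cast
      ring

/-- the "sum over coefficients" part of the derivation on the polynomial ring -/
noncomputable def Lsum : Polynomial (LaurentPolynomial ℂ) →ₗ[ℂ] SuperRing P m where
  toFun f := f.sum fun n a => uu P m ^ n * dA P m a
  map_add' p q := Polynomial.sum_add_index p q _ (by simp) (by intros; rw [map_add, mul_add])
  map_smul' c f := by
    rw [RingHom.id_apply]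
    show (c • f).sum (fun n a => uu P m ^ n * dA P m a)
      = c • f.sum (fun n a => uu P m ^ n * dA P m a)
    rw [Polynomial.sum_smul_index' f c _ (fun i => by rw [map_zero, mul_zero])]
    rw [Polynomial.sum_def, Polynomial.sum_def, Finset.smul_sum]
    exact Finset.sum_congr rfl fun n _ => by rw [map_smul, mul_smul_comm]

lemma Lsum_monomial (n : ℕ) (a : LaurentPolynomial ℂ) :
    Lsum P m (monomial n a) = uu P m ^ n * dA P m a := by
  show (monomial n a).sum (fun n a => uu P m ^ n * dA P m a) = _
  exact Polynomial.sum_monomial_index a _ (by rw [map_zero, mul_zero])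

lemma Lsum_mul (f g : Polynomial (LaurentPolynomial ℂ)) :
    Lsum P m (f * g) = mkh P m f * Lsum P m g + mkh P m g * Lsum P m f := by
  induction f using Polynomial.induction_on' with
  | add p q hp hq => rw [add_mul, map_add, map_add, map_add, hp, hq]; ring
  | monomial n a =>
    induction g using Polynomial.induction_on' with
    | add p q hp hq => rw [mul_add, map_add, map_add, map_add, hp, hq]; ring
    | monomial k b =>
      rw [monomial_mul_monomial, Lsum_monomial, Lsum_monomial, Lsum_monomial, dA_mul,
        ← C_mul_X_pow_eq_monomial, ← C_mul_X_pow_eq_monomial, map_mul, map_mul, map_pow,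
        map_pow, mkh_C, mkh_C, mkh_X, pow_add]
      ring

/-- the full derivation on the polynomial ring, as a linear map -/
lemma mkh_smul (c : ℂ) (g : Polynomial (LaurentPolynomial ℂ)) :
    mkh P m (c • g) = c • mkh P m g := rfl

/-- the full derivation on the polynomial ring, as a linear map -/
noncomputable def Dp : Polynomial (LaurentPolynomial ℂ) →ₗ[ℂ] SuperRing P m where
  toFun f := mkh P m (derivative f) * vP P m + Lsum P m f
  map_add' p q := by rw [derivative_add, map_add, map_add]; ring
  map_smul' c f := by
    rw [RingHom.id_apply, derivative_smul, mkh_smul, map_smul, smul_mul_assoc, smul_add]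

lemma Dp_apply (f : Polynomial (LaurentPolynomial ℂ)) :
    Dp P m f = mkh P m (derivative f) * vP P m + Lsum P m f := rfl

lemma Dp_mul (f g : Polynomial (LaurentPolynomial ℂ)) :
    Dp P m (f * g) = mkh P m f * Dp P m g + mkh P m g * Dp P m f := by
  rw [Dp_apply, Dp_apply, Dp_apply, derivative_mul, Lsum_mul, map_add, map_mul, map_mul]
  ring

lemma Dp_fP : Dp P m (fP P m) = 0 := by
  have h1 : Lsum P m (Polynomial.X ^ m : Polynomial (LaurentPolynomial ℂ)) = 0 := by
    rw [congrArg (Lsum P m) (X_pow_eq_monomial m), Lsum_monomial, dA_one, mul_zero]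
  have h2 : Lsum P m (Polynomial.C (toLaurent P)) = O P m (toLaurent (derivative P)) * ww P m := by
    rw [congrArg (Lsum P m) (monomial_zero_left (a := toLaurent P)).symm, Lsum_monomial, pow_zero,
      one_mul, dA_toLaurent]
  rw [Dp_apply, map_sub, derivative_X_pow, derivative_C, sub_zero, map_mul, mkh_C, map_pow,
    mkh_X, map_sub, h1, h2, zero_sub, map_natCast (O P m)]
  simp only [ww, vP]
  rw [Algebra.smul_def, map_natCast (algebraMap ℂ (SuperRing P m))]
  ring

lemma mkh_fP : mkh P m (fP P m) = 0 := AdjoinRoot.mk_self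

lemma Dp_ker : (Ideal.span {fP P m}).restrictScalars ℂ ≤ LinearMap.ker (Dp P m) := by
  intro g hg
  rw [Submodule.restrictScalars_mem] at hg
  obtain ⟨c, rfl⟩ := Ideal.mem_span_singleton'.mp hg
  rw [LinearMap.mem_ker, Dp_mul, Dp_fP, mul_zero, zero_add, mkh_fP, zero_mul]

/-- the derivation, descended to the superelliptic ring, as a linear map -/
noncomputable def DR : SuperRing P m →ₗ[ℂ] SuperRing P m :=
  (Submodule.liftQ ((Ideal.span {fP P m}).restrictScalars ℂ) (Dp P m) (Dp_ker P m)).comp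
    (Submodule.Quotient.restrictScalarsEquiv ℂ
      (Ideal.span {fP P m} : Ideal (Polynomial (LaurentPolynomial ℂ)))).symm.toLinearMap

lemma DR_mk (g : Polynomial (LaurentPolynomial ℂ)) :
    DR P m (AdjoinRoot.mk (fP P m) g) = Dp P m g := by
  show DR P m (Submodule.Quotient.mk g) = Dp P m g
  rw [DR]; erw [LinearMap.comp_apply, LinearEquiv.coe_toLinearMap]

lemma Dp_one : Dp P m 1 = 0 := by
  rw [Dp_apply, derivative_one, map_zero, zero_mul, zero_add,
    congrArg (Lsum P m) (show (1 : Polynomial (LaurentPolynomial ℂ)) = monomial 0 1 by simp),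
    Lsum_monomial, dA_one, mul_zero]

/-- the generating derivation -/
noncomputable def DD : Derivation ℂ (SuperRing P m) (SuperRing P m) where
  toLinearMap := DR P m
  map_one_eq_zero' := by
    rw [show (1 : SuperRing P m) = AdjoinRoot.mk (fP P m) 1 from (map_one _).symm, DR_mk, Dp_one]
  leibniz' a b := by
    obtain ⟨p, rfl⟩ := AdjoinRoot.mk_surjective a
    obtain ⟨q, rfl⟩ := AdjoinRoot.mk_surjective b
    show DR P m _ = _ • DR P m _ + _ • DR P m _
    rw [smul_eq_mul, smul_eq_mul, ← map_mul, DR_mk, DR_mk, DR_mk, Dp_mul]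
    rfl

lemma DD_apply (x : SuperRing P m) : DD P m x = DR P m x := rfl

lemma DD_root : DD P m (AdjoinRoot.root (fP P m)) = vP P m := by
  show DR P m (AdjoinRoot.mk (fP P m) Polynomial.X) = _
  rw [DR_mk, Dp_apply, derivative_X, map_one, one_mul,
    congrArg (Lsum P m) (monomial_one_one_eq_X
      (R := LaurentPolynomial ℂ)).symm, Lsum_monomial, dA_one, mul_zero, add_zero]

lemma DD_uu : DD P m (uu P m) = vP P m := DD_root P m

lemma DD_T : DD P m (O P m (T 1)) = ww P m := by
  show DR P m (AdjoinRoot.mk (fP P m) (Polynomial.C (T 1))) = _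
  rw [DR_mk, Dp_apply, derivative_C, map_zero, zero_mul, zero_add,
    congrArg (Lsum P m) (monomial_zero_left (a := (T 1 : LaurentPolynomial ℂ))).symm, Lsum_monomial,
    pow_zero, one_mul, show (T 1 : LaurentPolynomial ℂ) = AddMonoidAlgebra.single 1 1 from rfl, dA_single]
  simp

lemma tt_mul_tt' : O P m (T 1) * O P m (T (-1)) = 1 := by
  rw [O_T_mul]
  norm_num

lemma O_T_mem (S : Subalgebra ℂ (SuperRing P m)) (h1 : O P m (T 1) ∈ S)
    (h2 : O P m (T (-1)) ∈ S) (n : ℤ) : O P m (T n) ∈ S := by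
  have key : (T n : LaurentPolynomial ℂ) = T 1 ^ n.toNat * T (-1) ^ (-n).toNat := by
    rw [T_pow, T_pow, ← T_add]
    congr 1
    omega
  rw [key, map_mul, map_pow, map_pow]
  exact mul_mem (pow_mem h1 _) (pow_mem h2 _)

lemma O_mem (S : Subalgebra ℂ (SuperRing P m)) (h1 : O P m (T 1) ∈ S)
    (h2 : O P m (T (-1)) ∈ S) (a : LaurentPolynomial ℂ) : O P m a ∈ S := by
  induction a using AddMonoidAlgebra.induction_linear with
  | zero => rw [map_zero]; exact zero_mem S
  | add f g hf hg => rw [map_add]; exact add_mem hf hg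
  | single n c =>
    rw [single_eq_C_mul_T, map_mul, O_C]
    exact mul_mem (S.algebraMap_mem c) (O_T_mem P m S h1 h2 n)

lemma adjoin_top :
    Algebra.adjoin ℂ ({O P m (T 1), O P m (T (-1)), AdjoinRoot.root (fP P m)} :
      Set (SuperRing P m)) = ⊤ := by
  rw [eq_top_iff]
  rintro x -
  set S := Algebra.adjoin ℂ ({O P m (T 1), O P m (T (-1)), AdjoinRoot.root (fP P m)} :
    Set (SuperRing P m)) with hS
  have h1 : O P m (T 1) ∈ S := Algebra.subset_adjoin (by simp)
  have h2 : O P m (T (-1)) ∈ S := Algebra.subset_adjoin (by simp)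
  have hu : AdjoinRoot.root (fP P m) ∈ S := Algebra.subset_adjoin (by simp)
  induction x using AdjoinRoot.induction_on with
  | ih g =>
    rw [← AdjoinRoot.aeval_eq, Polynomial.aeval_def, Polynomial.eval₂_eq_sum, Polynomial.sum_def]
    refine sum_mem fun n hn => ?_
    rw [AdjoinRoot.algebraMap_eq]
    exact mul_mem (O_mem P m S h1 h2 _) (pow_mem hu n)

lemma uu_pow : uu P m ^ m = O P m (toLaurent P) := by
  have h := mkh_fP P m
  rw [map_sub, map_pow, mkh_X, mkh_C, sub_eq_zero] at h
  exact h

lemma O_toLaurent (Q : Polynomial ℂ) : O P m (toLaurent Q) = aeval (O P m (T 1)) Q := by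
  induction Q using Polynomial.induction_on' with
  | add f g hf hg => rw [map_add, map_add, map_add, hf, hg]
  | monomial n r =>
    rw [toLaurent_C_mul_T, map_mul, O_C, aeval_monomial]
    congr 1
    rw [show (T (n : ℤ) : LaurentPolynomial ℂ) = T 1 ^ n by rw [T_pow, mul_one], map_pow]

lemma chain (E : Derivation ℂ (SuperRing P m) (SuperRing P m)) (Q : Polynomial ℂ) :
    E (O P m (toLaurent Q)) = aeval (O P m (T 1)) (derivative Q) * E (O P m (T 1)) := by
  rw [O_toLaurent, Derivation.comp_aeval_eq, smul_eq_mul]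

lemma rel' (E : Derivation ℂ (SuperRing P m) (SuperRing P m)) :
    vP P m * E (O P m (T 1)) =
      algebraMap ℂ (SuperRing P m) (m : ℂ) * (uu P m ^ (m - 1) * E (uu P m)) := by
  have h := Derivation.leibniz_pow E (a := uu P m) m
  rw [uu_pow, chain, ← O_toLaurent] at h
  simp only [vP]
  rw [h, ← Nat.cast_smul_eq_nsmul ℂ m, Algebra.smul_def, smul_eq_mul]

lemma E_tinv (E : Derivation ℂ (SuperRing P m) (SuperRing P m)) :
    E (O P m (T (-1))) =
      -(O P m (T (-1)) * O P m (T (-1))) * E (O P m (T 1)) := by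
  have h0 : E (O P m (T 1) * O P m (T (-1))) = 0 := by
    rw [tt_mul_tt', Derivation.map_one_eq_zero]
  rw [Derivation.leibniz, smul_eq_mul, smul_eq_mul] at h0
  have h1 := tt_mul_tt' P m
  linear_combination (O P m (T (-1))) * h0 - E (O P m (T (-1))) * h1

end SupAux

/-- if `P` and `P'` are coprime and `m ≥ 2`, then `Der_ℂ(R)` for
`R = ℂ[t,t⁻¹,u | uᵐ = P(t)]` is a free `R`-module of rank one generated by
`P'(t)∂/∂u + m uᵐ⁻¹ ∂/∂t` (the derivation with `D u = P'(t)` and `D t = m uᵐ⁻¹`). -/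
theorem superelliptic_derivations_free_rank_one
    (P : Polynomial ℂ) (m : ℕ) (hm : 2 ≤ m)
    (hcop : IsCoprime P (Polynomial.derivative P)) :
    ∃ D : Derivation ℂ (SuperRing P m) (SuperRing P m),
      D (AdjoinRoot.root _) =
        AdjoinRoot.of _ (Polynomial.toLaurent (Polynomial.derivative P)) ∧
      D (AdjoinRoot.of _ (LaurentPolynomial.T 1)) =
        (m : ℂ) • AdjoinRoot.root _ ^ (m - 1) ∧
      ∀ E : Derivation ℂ (SuperRing P m) (SuperRing P m),
        ∃! r : SuperRing P m, E = r • D := by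
  classical
  obtain ⟨a, b, hab⟩ := hcop
  have hmne : m ≠ 0 := by omega
  have hm0 : (m : ℂ) ≠ 0 := Nat.cast_ne_zero.mpr hmne
  refine ⟨SupAux.DD P m, SupAux.DD_root P m, SupAux.DD_T P m, ?_⟩
  intro E
  have hμ : algebraMap ℂ (SuperRing P m) (m : ℂ) * algebraMap ℂ (SuperRing P m) ((m : ℂ)⁻¹)
      = 1 := by
    rw [← map_mul, mul_inv_cancel₀ hm0, map_one]
  have hP' : aeval (SupAux.O P m (T 1)) (derivative P) = SupAux.vP P m :=
    (SupAux.O_toLaurent P m (derivative P)).symm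
  have hP : aeval (SupAux.O P m (T 1)) P = SupAux.uu P m * SupAux.uu P m ^ (m - 1) := by
    rw [← SupAux.O_toLaurent, ← SupAux.uu_pow, mul_pow_sub_one hmne]
  have key : aeval (SupAux.O P m (T 1)) b * SupAux.vP P m
      + aeval (SupAux.O P m (T 1)) a * (SupAux.uu P m * SupAux.uu P m ^ (m - 1)) = 1 := by
    have h := congrArg (aeval (SupAux.O P m (T 1))) hab
    rw [map_add, map_mul, map_mul, map_one, hP, hP'] at h
    linear_combination h
  have hw : SupAux.ww P m = algebraMap ℂ (SuperRing P m) (m : ℂ) * SupAux.uu P m ^ (m - 1) := by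
    rw [SupAux.ww, Algebra.smul_def]
  set r : SuperRing P m := aeval (SupAux.O P m (T 1)) b * E (SupAux.uu P m)
      + algebraMap ℂ (SuperRing P m) ((m : ℂ)⁻¹)
        * (aeval (SupAux.O P m (T 1)) a * (SupAux.uu P m * E (SupAux.O P m (T 1)))) with hr
  have hrel := SupAux.rel' P m E
  have hEu : E (SupAux.uu P m) = r * SupAux.vP P m := by
    rw [hr]
    linear_combination (-E (SupAux.uu P m)) * key
      - (algebraMap ℂ (SuperRing P m) ((m : ℂ)⁻¹) * aeval (SupAux.O P m (T 1)) a
          * SupAux.uu P m) * hrel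
      - (aeval (SupAux.O P m (T 1)) a * SupAux.uu P m * SupAux.uu P m ^ (m - 1)
          * E (SupAux.uu P m)) * hμ
  have hEt : E (SupAux.O P m (T 1)) = r * SupAux.ww P m := by
    rw [hr, hw]
    linear_combination (-E (SupAux.O P m (T 1))) * key
      + aeval (SupAux.O P m (T 1)) b * hrel
      - (aeval (SupAux.O P m (T 1)) a * SupAux.uu P m * SupAux.uu P m ^ (m - 1)
          * E (SupAux.O P m (T 1))) * hμ
  have hED : E = r • SupAux.DD P m := by
    refine Derivation.ext_of_adjoin_eq_top _ (SupAux.adjoin_top P m) ?_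
    intro x hx
    have hsm : ∀ z, (r • SupAux.DD P m) z = r * SupAux.DD P m z := fun z => by
      rw [Derivation.smul_apply, smul_eq_mul]
    simp only [Set.mem_insert_iff, Set.mem_singleton_iff] at hx
    rcases hx with rfl | rfl | rfl
    · rw [hsm, SupAux.DD_T]; exact hEt
    · rw [hsm, SupAux.E_tinv P m (SupAux.DD P m), SupAux.E_tinv P m E, SupAux.DD_T]
      linear_combination -(SupAux.O P m (T (-1)) * SupAux.O P m (T (-1))) * hEt
    · rw [hsm, SupAux.DD_root]; exact hEu
  refine ⟨r, hED, ?_⟩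
  intro y hy
  have h1 : y * SupAux.vP P m = r * SupAux.vP P m := by
    have h := congrArg (fun D : Derivation ℂ (SuperRing P m) (SuperRing P m) =>
      D (SupAux.uu P m)) (hy.symm.trans hED)
    simpa only [Derivation.smul_apply, smul_eq_mul, SupAux.DD_uu] using h
  have h2 : y * (algebraMap ℂ (SuperRing P m) (m : ℂ) * SupAux.uu P m ^ (m - 1))
      = r * (algebraMap ℂ (SuperRing P m) (m : ℂ) * SupAux.uu P m ^ (m - 1)) := by
    have h := congrArg (fun D : Derivation ℂ (SuperRing P m) (SuperRing P m) =>
      D (SupAux.O P m (T 1))) (hy.symm.trans hED)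
    simpa only [Derivation.smul_apply, smul_eq_mul, SupAux.DD_T, hw] using h
  linear_combination aeval (SupAux.O P m (T 1)) b * h1
    + algebraMap ℂ (SuperRing P m) ((m : ℂ)⁻¹) * aeval (SupAux.O P m (T 1)) a
        * SupAux.uu P m * h2
    - (aeval (SupAux.O P m (T 1)) a * SupAux.uu P m * SupAux.uu P m ^ (m - 1) * (y - r)) * hμ
    - (y - r) * key
end
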